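/- Let n ≥ 2 and let A ∈ ℝ^{n×n} be symmetric satisfying condition (M) for the Lorentz cone L. Then A_{1j} = A_{j1} = 0 for all j ∈ {2, …, n}, i.e., A = diag(A_{11}, Ã) for some symmetric matrix Ã ∈ ℝ^{(n−1)×(n−1)}. -/

import Mathlib

open Matrix RealInnerProductSpace

/-- The Lorentz cone `L = {x ∈ ℝ^{n+1} : x₁ ≥ √(x₂² + ⋯ + x_{n+1}²)}`. -/
def lorentzCone (n : ℕ) : Set (EuclideanSpace ℝ (Fin (n + 1))) :=
  {x | Real.sqrt (∑ i : Fin n, x i.succ ^ 2) ≤ x 0}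


/-- Condition (M): `⟨Ax,x⟩ ≥ ⟨Ay,y⟩` for all `x ∈ 𝕊` and `y ∈ K ∩ 𝕊` with `x ⊥ y`. -/
def CondM {n : ℕ} (A : Matrix (Fin n) (Fin n) ℝ) (K : Set (EuclideanSpace ℝ (Fin n))) : Prop :=
  ∀ x y : EuclideanSpace ℝ (Fin n), ‖x‖ = 1 → y ∈ K → ‖y‖ = 1 → ⟪x, y⟫ = 0 →
    ⟪Matrix.toEuclideanLin A y, y⟫ ≤ ⟪Matrix.toEuclideanLin A x, x⟫

/-! The vectors `(e₀ ± e_j)/√2` are orthogonal unit vectors on the boundary of the Lorentz cone,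
so condition (M), applied in both directions, forces their quadratic forms to agree. These differ
by `A₀ⱼ + Aⱼ₀`, which therefore vanishes, and symmetry gives `A₀ⱼ = Aⱼ₀ = 0`. -/

open EuclideanSpace

theorem CondM.inner_toEuclideanLin_self_eq {n : ℕ} {A : Matrix (Fin n) (Fin n) ℝ}
    {K : Set (EuclideanSpace ℝ (Fin n))} (hM : CondM A K) {x y : EuclideanSpace ℝ (Fin n)}
    (hx : x ∈ K) (hy : y ∈ K) (hx1 : ‖x‖ = 1) (hy1 : ‖y‖ = 1) (hxy : ⟪x, y⟫ = 0) :
    ⟪toEuclideanLin A x, x⟫ = ⟪toEuclideanLin A y, y⟫ :=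
  le_antisymm (hM y x hy1 hx hx1 (real_inner_comm x y ▸ hxy)) (hM x y hx1 hy hy1 hxy)

theorem inner_single_add_single {ι : Type*} [Fintype ι] [DecidableEq ι] {i j : ι} (hij : i ≠ j)
    (a b c d : ℝ) :
    ⟪single i a + single j b, single i c + single j d⟫ = a * c + b * d := by
  simp [inner_add_left, inner_add_right, inner_single_left, hij, hij.symm]

theorem norm_single_add_single {ι : Type*} [Fintype ι] [DecidableEq ι] {i j : ι} (hij : i ≠ j)
    (a b : ℝ) : ‖single i a + single j b‖ = √(a ^ 2 + b ^ 2) := by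
  rw [norm_eq_sqrt_real_inner, inner_single_add_single hij]
  ring_nf

theorem inner_toEuclideanLin_single_add_single {ι : Type*} [Fintype ι] [DecidableEq ι]
    (A : Matrix ι ι ℝ) (i j : ι) (a b : ℝ) :
    ⟪toEuclideanLin A (single i a + single j b), single i a + single j b⟫
      = a ^ 2 * A i i + a * b * (A i j + A j i) + b ^ 2 * A j j := by
  simp [inner_add_left, inner_add_right, inner_single_right, mulVec_single]
  ring

theorem single_zero_add_single_succ_mem_lorentzCone {n : ℕ} (j : Fin n) {a b : ℝ}
    (hab : |b| ≤ a) : single 0 a + single j.succ b ∈ lorentzCone n := by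
  simp [lorentzCone, Real.sqrt_sq_eq_abs, hab]

theorem quadratic_spherical_stmt17_general (n : ℕ)
    (A : Matrix (Fin (n + 1)) (Fin (n + 1)) ℝ) (hA : A.IsSymm)
    (hM : CondM A (lorentzCone n)) :
    ∀ j : Fin (n + 1), j ≠ 0 → A 0 j = 0 ∧ A j 0 = 0 := by
  intro j hj
  obtain ⟨k, rfl⟩ := Fin.exists_succ_eq.mpr hj
  obtain ⟨a, ha0, ha⟩ : ∃ a : ℝ, 0 ≤ a ∧ a ^ 2 = 2⁻¹ :=
    ⟨√2⁻¹, Real.sqrt_nonneg _, Real.sq_sqrt (by norm_num)⟩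
  have hunit (b : ℝ) (hb : b ^ 2 = a ^ 2) : ‖single 0 a + single k.succ b‖ = 1 := by
    rw [norm_single_add_single hj.symm, hb, ha]
    norm_num
  have key := hM.inner_toEuclideanLin_self_eq
    (single_zero_add_single_succ_mem_lorentzCone k (abs_of_nonneg ha0).le)
    (single_zero_add_single_succ_mem_lorentzCone k (by rw [abs_neg, abs_of_nonneg ha0]))
    (hunit a rfl) (hunit (-a) (neg_sq a)) (by rw [inner_single_add_single hj.symm]; ring)
  rw [inner_toEuclideanLin_single_add_single, inner_toEuclideanLin_single_add_single] at key
  have hsum : A 0 k.succ + A k.succ 0 = 0 := by nlinarith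
  have hsymm := hA.apply 0 k.succ
  constructor <;> linarith

/-- If a symmetric matrix `A` satisfies condition (M) for the Lorentz cone, then
all off-diagonal entries of its first row and first column vanish. -/
theorem quadratic_spherical_stmt17 (n : ℕ) (hn : 1 ≤ n)
    (A : Matrix (Fin (n + 1)) (Fin (n + 1)) ℝ) (hA : A.IsSymm)
    (hM : CondM A (lorentzCone n)) :
    ∀ j : Fin (n + 1), j ≠ 0 → A 0 j = 0 ∧ A j 0 = 0 :=
  quadratic_spherical_stmt17_general n A hA hM
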